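/- arXiv:2605.02950 — 3 statements merged into one kernel-verified Lean document; each statement's English description precedes it below -/
import Mathlib

section
/- Fix an integer C ≥ 1, a regressor G ∈ ℝ^C with G ≠ 0, a step size β > 0, a scalar observation v ∈ ℝ, a target parameter vector α ∈ ℝ^C, and a current estimate a ∈ ℝ^C, and let a' := a + β (v − ⟨G,a⟩)/(1 + β‖G‖²) · G denote the NLMS update. Then the squared estimation-error norms satisfy the exact recursion ‖α − a'‖² = ‖α − a‖² − ⟨G, α − a⟩² / ‖G‖² + ⟨G, α − a'⟩² / ‖G‖². -/
/-!
`‖e‖² − ⟪G, e⟫² / ‖G‖²` is the squared norm of the component of `e` orthogonal to `G`, so it does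
not change when `e` moves along `G`. An NLMS update moves the estimate along the regressor `G`,
hence the error `α − a` too, whatever the step size.
-/

open scoped RealInnerProductSpace

theorem norm_sq_sub_inner_sq_div_add_smul {E : Type*} [NormedAddCommGroup E]
    [InnerProductSpace ℝ E] (G e : E) (c : ℝ) :
    ‖e + c • G‖ ^ 2 - ⟪G, e + c • G⟫ ^ 2 / ‖G‖ ^ 2 = ‖e‖ ^ 2 - ⟪G, e⟫ ^ 2 / ‖G‖ ^ 2 := by
  rcases eq_or_ne G 0 with rfl | hG
  · simp
  have hG2 : ‖G‖ ^ 2 ≠ 0 := by positivity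
  have hnorm : ‖e + c • G‖ ^ 2 = ‖e‖ ^ 2 + 2 * (c * ⟪G, e⟫) + c ^ 2 * ‖G‖ ^ 2 := by
    rw [norm_add_sq_real, norm_smul, real_inner_smul_right, real_inner_comm, mul_pow,
      Real.norm_eq_abs, sq_abs]
  have hinner : ⟪G, e + c • G⟫ = ⟪G, e⟫ + c * ‖G‖ ^ 2 := by
    rw [inner_add_right, real_inner_smul_right, real_inner_self_eq_norm_sq]
  rw [hnorm, hinner]
  field_simp
  ring

theorem nlms_error_norm_recursion_general
    (C : ℕ)
    (G : EuclideanSpace ℝ (Fin C))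
    (β : ℝ) (v : ℝ)
    (α a : EuclideanSpace ℝ (Fin C))
    (a' : EuclideanSpace ℝ (Fin C))
    (ha' : a' = a + (β * (v - ⟪G, a⟫) / (1 + β * ‖G‖ ^ 2)) • G) :
    ‖α - a'‖ ^ 2
      = ‖α - a‖ ^ 2 - ⟪G, α - a⟫ ^ 2 / ‖G‖ ^ 2 + ⟪G, α - a'⟫ ^ 2 / ‖G‖ ^ 2 := by
  set c : ℝ := β * (v - ⟪G, a⟫) / (1 + β * ‖G‖ ^ 2)
  have herror : α - a' = (α - a) + (-c) • G := by
    rw [ha', neg_smul]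
    abel
  have := norm_sq_sub_inner_sq_div_add_smul G (α - a) (-c)
  rw [← herror] at this
  linarith

/-- Exact recursion for the squared estimation-error norm under one NLMS update:
`‖α − a'‖² = ‖α − a‖² − ⟨G, α − a⟩²/‖G‖² + ⟨G, α − a'⟩²/‖G‖²`. -/
theorem nlms_error_norm_recursion
    (C : ℕ) (hC : 1 ≤ C)
    (G : EuclideanSpace ℝ (Fin C)) (hG : G ≠ 0)
    (β : ℝ) (hβ : 0 < β) (v : ℝ)
    (α a : EuclideanSpace ℝ (Fin C))
    (a' : EuclideanSpace ℝ (Fin C))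
    (ha' : a' = a + (β * (v - ⟪G, a⟫) / (1 + β * ‖G‖ ^ 2)) • G) :
    ‖α - a'‖ ^ 2
      = ‖α - a‖ ^ 2 - ⟪G, α - a⟫ ^ 2 / ‖G‖ ^ 2 + ⟪G, α - a'⟫ ^ 2 / ‖G‖ ^ 2 :=
  nlms_error_norm_recursion_general C G β v α a a' ha'
end

section
/- Fix an integer C ≥ 1, a regressor G ∈ ℝ^C, a step size β > 0, a target parameter vector α ∈ ℝ^C, a disturbance D ∈ ℝ, a scalar observation v := ⟨G, α⟩ + D, a current estimate a ∈ ℝ^C, and let a' := a + β (v − ⟨G,a⟩)/(1 + β‖G‖²) · G denote the NLMS update. If the update leaves the squared estimation-error norm unchanged, i.e. ‖α − a'‖² = ‖α − a‖², then either ⟨G, α − a⟩ + D = 0, or the prediction error satisfies the steady-state relation ⟨G, α − a⟩ = (β‖G‖² / (2 + β‖G‖²)) · D. -/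
open scoped RealInnerProductSpace

/-! The NLMS step moves the error `e = α - a` along `G` by `c = β(⟨G,e⟩ + D)/(1 + β‖G‖²)`, and
`‖e - cG‖² = ‖e‖² - c(2⟨G,e⟩ - c‖G‖²)`. So the error norm is unchanged exactly when `c = 0`, i.e.
`⟨G,e⟩ + D = 0`, or `c‖G‖² = 2⟨G,e⟩`, which clears denominators to `⟨G,e⟩(2 + β‖G‖²) = β‖G‖² D`. -/

theorem norm_sub_smul_sq_eq_norm_sq_iff {E : Type*} [NormedAddCommGroup E]
    [InnerProductSpace ℝ E] (e G : E) (c : ℝ) :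
    ‖e - c • G‖ ^ 2 = ‖e‖ ^ 2 ↔ c = 0 ∨ c * ‖G‖ ^ 2 = 2 * ⟪G, e⟫ := by
  have hexpand : ‖e - c • G‖ ^ 2 = ‖e‖ ^ 2 - c * (2 * ⟪G, e⟫ - c * ‖G‖ ^ 2) := by
    rw [norm_sub_sq_real, real_inner_smul_right, norm_smul, mul_pow, Real.norm_eq_abs, sq_abs,
      real_inner_comm]
    ring
  rw [hexpand, sub_eq_self, mul_eq_zero, sub_eq_zero, eq_comm (a := 2 * ⟪G, e⟫)]

theorem add_eq_zero_or_eq_mul_of_nlms_gain {β g p D : ℝ} (hβ : 0 < β) (hg : 0 ≤ g)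
    (h : β * (p + D) / (1 + β * g) = 0 ∨ β * (p + D) / (1 + β * g) * g = 2 * p) :
    p + D = 0 ∨ p = β * g / (2 + β * g) * D := by
  have hden : 0 < 1 + β * g := by positivity
  rcases h with hzero | hbalance
  · left
    simpa [hβ.ne', hden.ne'] using hzero
  · right
    rw [div_mul_eq_mul_div, div_eq_iff hden.ne'] at hbalance
    rw [div_mul_eq_mul_div, eq_div_iff (by positivity)]
    linarith

theorem nlms_steady_state_prediction_error_general
    (C : ℕ)
    (G : EuclideanSpace ℝ (Fin C))
    (β : ℝ) (hβ : 0 < β)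
    (α : EuclideanSpace ℝ (Fin C)) (D : ℝ)
    (v : ℝ) (hv : v = ⟪G, α⟫ + D)
    (a : EuclideanSpace ℝ (Fin C))
    (a' : EuclideanSpace ℝ (Fin C))
    (ha' : a' = a + (β * (v - ⟪G, a⟫) / (1 + β * ‖G‖ ^ 2)) • G)
    (hsteady : ‖α - a'‖ ^ 2 = ‖α - a‖ ^ 2) :
    ⟪G, α - a⟫ + D = 0 ∨
      ⟪G, α - a⟫ = (β * ‖G‖ ^ 2 / (2 + β * ‖G‖ ^ 2)) * D := by
  have hresidual : v - ⟪G, a⟫ = ⟪G, α - a⟫ + D := by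
    rw [hv, inner_sub_right]
    ring
  have herror : α - a' = (α - a) - (β * (⟪G, α - a⟫ + D) / (1 + β * ‖G‖ ^ 2)) • G := by
    rw [ha', hresidual]
    abel
  rw [herror, norm_sub_smul_sq_eq_norm_sq_iff] at hsteady
  exact add_eq_zero_or_eq_mul_of_nlms_gain hβ (sq_nonneg _) hsteady

/-- Steady-state form of the NLMS prediction error: if one NLMS update with
observation `v = ⟨G, α⟩ + D` leaves the squared estimation-error norm unchanged,
then either `⟨G, α − a⟩ + D = 0` or
`⟨G, α − a⟩ = (β‖G‖²/(2 + β‖G‖²)) · D`. -/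
theorem nlms_steady_state_prediction_error
    (C : ℕ) (hC : 1 ≤ C)
    (G : EuclideanSpace ℝ (Fin C))
    (β : ℝ) (hβ : 0 < β)
    (α : EuclideanSpace ℝ (Fin C)) (D : ℝ)
    (v : ℝ) (hv : v = ⟪G, α⟫ + D)
    (a : EuclideanSpace ℝ (Fin C))
    (a' : EuclideanSpace ℝ (Fin C))
    (ha' : a' = a + (β * (v - ⟪G, a⟫) / (1 + β * ‖G‖ ^ 2)) • G)
    (hsteady : ‖α - a'‖ ^ 2 = ‖α - a‖ ^ 2) :
    ⟪G, α - a⟫ + D = 0 ∨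
      ⟪G, α - a⟫ = (β * ‖G‖ ^ 2 / (2 + β * ‖G‖ ^ 2)) * D :=
  nlms_steady_state_prediction_error_general C G β hβ α D v hv a a' ha' hsteady
end

section
/- Fix integers C ≥ 1 and p ≥ 1, a step size β > 0, and a balancing parameter ρ > 0. Let G ∈ ℝ^C be a probability vector, i.e. every entry of G lies in [0,1] and the entries of G sum to 1, and set κ := β‖G‖² / (2 + β‖G‖²). Let Δ ∈ ℝ^C, let w^1, …, w^C ∈ ℝ^p, let ξ ∈ ℝ^p, and let e ∈ ℝ^p be the vector whose j-th coordinate is e_j = (1+κ) Σ_{c=1}^C Δ_c (w^c)_j + κ ξ_j. Then ‖e‖² ≤ (1+ρ) (1 + β/(2+β))² (Σ_{c=1}^C ‖w^c‖²) ‖Δ‖² + (1+ρ⁻¹) (β/(2+β))² ‖ξ‖². -/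
/-!
Writing `e = (1 + κ) • ∑_c Δ_c • w^c + κ • ξ`, Young's inequality
`‖x + y‖² ≤ (1 + ρ)‖x‖² + (1 + ρ⁻¹)‖y‖²` separates the two terms, and Cauchy–Schwarz bounds
`‖∑_c Δ_c • w^c‖² ≤ (∑_c ‖w^c‖²)‖Δ‖²`. Finally `‖G‖² ≤ ∑_i G_i = 1` for a probability vector,
and `t ↦ βt/(2 + βt)` is increasing, so `0 ≤ κ ≤ β/(2 + β)`.
-/

open Finset

theorem add_sq_le_one_add_mul_sq_add_one_add_inv_mul_sq {x y ρ : ℝ} (hρ : 0 < ρ) :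
    (x + y) ^ 2 ≤ (1 + ρ) * x ^ 2 + (1 + ρ⁻¹) * y ^ 2 := by
  have hρρ : ρ * ρ⁻¹ = 1 := mul_inv_cancel₀ hρ.ne'
  -- `ρ⁻¹ (ρx - y)² ≥ 0` is the difference of the two sides.
  nlinarith [mul_nonneg (inv_nonneg.2 hρ.le) (sq_nonneg (ρ * x - y))]

theorem norm_add_sq_le_one_add_mul_sq_add_one_add_inv_mul_sq {E : Type*} [SeminormedAddGroup E]
    (x y : E) {ρ : ℝ} (hρ : 0 < ρ) :
    ‖x + y‖ ^ 2 ≤ (1 + ρ) * ‖x‖ ^ 2 + (1 + ρ⁻¹) * ‖y‖ ^ 2 :=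
  calc ‖x + y‖ ^ 2 ≤ (‖x‖ + ‖y‖) ^ 2 := by gcongr; exact norm_add_le x y
    _ ≤ _ := add_sq_le_one_add_mul_sq_add_one_add_inv_mul_sq hρ

theorem norm_sum_smul_sq_le {ι E : Type*} [Fintype ι] [SeminormedAddCommGroup E]
    [NormedSpace ℝ E] (a : EuclideanSpace ℝ ι) (v : ι → E) :
    ‖∑ i, a i • v i‖ ^ 2 ≤ (∑ i, ‖v i‖ ^ 2) * ‖a‖ ^ 2 :=
  calc ‖∑ i, a i • v i‖ ^ 2 ≤ (∑ i, ‖a i‖ * ‖v i‖) ^ 2 := by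
        gcongr
        simpa only [norm_smul] using norm_sum_le univ fun i ↦ a i • v i
    _ ≤ (∑ i, ‖a i‖ ^ 2) * ∑ i, ‖v i‖ ^ 2 := sum_mul_sq_le_sq_mul_sq _ _ _
    _ = (∑ i, ‖v i‖ ^ 2) * ‖a‖ ^ 2 := by rw [EuclideanSpace.norm_sq_eq, mul_comm]

theorem EuclideanSpace.norm_sq_le_sum_of_forall_mem_Icc {ι : Type*} [Fintype ι]
    (G : EuclideanSpace ℝ ι) (hG : ∀ i, G i ∈ Set.Icc (0 : ℝ) 1) : ‖G‖ ^ 2 ≤ ∑ i, G i := by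
  rw [EuclideanSpace.real_norm_sq_eq]
  refine sum_le_sum fun i _ ↦ ?_
  obtain ⟨h0, h1⟩ := hG i
  nlinarith

theorem mul_div_two_add_mul_le {β t : ℝ} (hβ : 0 ≤ β) (ht0 : 0 ≤ t) (ht1 : t ≤ 1) :
    β * t / (2 + β * t) ≤ β / (2 + β) := by
  rw [div_le_div_iff₀ (by positivity) (by linarith)]
  nlinarith [mul_nonneg hβ (sub_nonneg.2 ht1)]

theorem encoding_error_pointwise_bound_general
    (C p : ℕ)
    (β : ℝ) (hβ : 0 < β)
    (ρ : ℝ) (hρ : 0 < ρ)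
    (G : EuclideanSpace ℝ (Fin C))
    (hG01 : ∀ i, G i ∈ Set.Icc (0 : ℝ) 1)
    (hGsum : ∑ i, G i = 1)
    (κ : ℝ) (hκ : κ = β * ‖G‖ ^ 2 / (2 + β * ‖G‖ ^ 2))
    (Δ : EuclideanSpace ℝ (Fin C))
    (w : Fin C → EuclideanSpace ℝ (Fin p))
    (ξ : EuclideanSpace ℝ (Fin p))
    (e : EuclideanSpace ℝ (Fin p))
    (he : ∀ j, e j = (1 + κ) * (∑ c, Δ c * w c j) + κ * ξ j) :
    ‖e‖ ^ 2
      ≤ (1 + ρ) * (1 + β / (2 + β)) ^ 2 * (∑ c, ‖w c‖ ^ 2) * ‖Δ‖ ^ 2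
        + (1 + ρ⁻¹) * (β / (2 + β)) ^ 2 * ‖ξ‖ ^ 2 := by
  have he' : e = (1 + κ) • ∑ c, Δ c • w c + κ • ξ := by
    ext j
    simp [he]
  have hG : ‖G‖ ^ 2 ≤ 1 := hGsum ▸ EuclideanSpace.norm_sq_le_sum_of_forall_mem_Icc G hG01
  have hκ0 : 0 ≤ κ := by rw [hκ]; positivity
  have hκle : κ ≤ β / (2 + β) := hκ ▸ mul_div_two_add_mul_le hβ.le (sq_nonneg _) hG
  have hS := norm_sum_smul_sq_le Δ w
  calc ‖e‖ ^ 2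
      ≤ (1 + ρ) * ‖(1 + κ) • ∑ c, Δ c • w c‖ ^ 2 + (1 + ρ⁻¹) * ‖κ • ξ‖ ^ 2 :=
        he' ▸ norm_add_sq_le_one_add_mul_sq_add_one_add_inv_mul_sq _ _ hρ
    _ = (1 + ρ) * (1 + κ) ^ 2 * ‖∑ c, Δ c • w c‖ ^ 2 + (1 + ρ⁻¹) * κ ^ 2 * ‖ξ‖ ^ 2 := by
        simp only [norm_smul, Real.norm_eq_abs, mul_pow, sq_abs, mul_assoc]
    _ ≤ (1 + ρ) * (1 + β / (2 + β)) ^ 2 * ((∑ c, ‖w c‖ ^ 2) * ‖Δ‖ ^ 2)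
          + (1 + ρ⁻¹) * (β / (2 + β)) ^ 2 * ‖ξ‖ ^ 2 := by
        gcongr
    _ = _ := by ring

/-- Pointwise core of the encoding-error proposition: with `G` a probability
vector, `κ := β‖G‖²/(2 + β‖G‖²)`, and `e` the vector with coordinates
`e_j = (1+κ) Σ_c Δ_c (w^c)_j + κ ξ_j`, one has
`‖e‖² ≤ (1+ρ)(1 + β/(2+β))²(Σ_c ‖w^c‖²)‖Δ‖² + (1+ρ⁻¹)(β/(2+β))²‖ξ‖²`. -/
theorem encoding_error_pointwise_bound
    (C p : ℕ) (hC : 1 ≤ C) (hp : 1 ≤ p)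
    (β : ℝ) (hβ : 0 < β)
    (ρ : ℝ) (hρ : 0 < ρ)
    (G : EuclideanSpace ℝ (Fin C))
    (hG01 : ∀ i, G i ∈ Set.Icc (0 : ℝ) 1)
    (hGsum : ∑ i, G i = 1)
    (κ : ℝ) (hκ : κ = β * ‖G‖ ^ 2 / (2 + β * ‖G‖ ^ 2))
    (Δ : EuclideanSpace ℝ (Fin C))
    (w : Fin C → EuclideanSpace ℝ (Fin p))
    (ξ : EuclideanSpace ℝ (Fin p))
    (e : EuclideanSpace ℝ (Fin p))
    (he : ∀ j, e j = (1 + κ) * (∑ c, Δ c * w c j) + κ * ξ j) :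
    ‖e‖ ^ 2
      ≤ (1 + ρ) * (1 + β / (2 + β)) ^ 2 * (∑ c, ‖w c‖ ^ 2) * ‖Δ‖ ^ 2
        + (1 + ρ⁻¹) * (β / (2 + β)) ^ 2 * ‖ξ‖ ^ 2 :=
  encoding_error_pointwise_bound_general C p β hβ ρ hρ G hG01 hGsum κ hκ Δ w ξ e he
end
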